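/- Let α be a composition of n ≥ 1 and let ν > 1 be an integer. Then D_{α∁}(−ν, ν−1) = K_α(ν) as quasisymmetric functions over ℂ, where α∁ := comp([n−1] ∖ set(α)); explicitly, ∑_{β ⪰ α∁} (−ν)^{ℓ(β)−n} (1−ν)^{ℓ(α∁)−ℓ(β)} M_β = K_α(ν). -/

import Mathlib

namespace QSymPaper

attribute [local instance 0] Classical.propDecidable

noncomputable section

/-- A composition condition: all parts are positive. -/
def IsComp (α : List ℕ) : Prop := ∀ a ∈ α, 0 < a

/-- `set(α)`: the set of proper partial sums of `α`. -/
def setComp (α : List ℕ) : Finset ℕ :=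
  (Finset.range (α.length - 1)).image (fun j => (α.take (j + 1)).sum)

/-- `comp(S)` for `S ⊆ [n−1]`: the composition of `n` whose set of partial sums is `S`. -/
def compOf (n : ℕ) (S : Finset ℕ) : List ℕ :=
  if n = 0 then []
  else
    let l := S.sort (· ≤ ·) ++ [n]
    List.zipWith (fun a b => a - b) l (0 :: l)

/-- Monomial quasisymmetric function `M_α`, in the variables of the sub-alphabet `P`. -/
def Mqs (σ : Type) [LinearOrder σ] (F : Type) [CommRing F] (P : σ → Prop) (α : List ℕ) :
    MvPowerSeries σ F :=
  fun (d : σ →₀ ℕ) => if (∀ i ∈ d.support, P i) ∧ (d.support.sort (· ≤ ·)).map (fun i => d i) = α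
    then 1 else 0

/-- Fundamental quasisymmetric function `L_{comp(S)}` (for `S ⊆ [n−1]`). -/
def Lqs (σ : Type) [LinearOrder σ] (F : Type) [CommRing F] (P : σ → Prop)
    (n : ℕ) (S : Finset ℕ) : MvPowerSeries σ F :=
  ∑ T ∈ (Finset.Icc 1 (n - 1)).powerset.filter (fun T => S ⊆ T), Mqs σ F P (compOf n T)

/-- The weight `wt_I(i) = |[1,i−1] ∩ I| + 1`. -/
def wt (I : Finset ℕ) (i : ℕ) : ℕ := (Finset.Icc 1 (i - 1) ∩ I).card + 1

/-- `A∁ = [N] ∖ A`. -/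
def coSet (N : ℕ) (A : Finset ℕ) : Finset ℕ := Finset.Icc 1 N \ A

/-- `e(A)`: right endpoints of the maximal intervals of `A`, except `N`. -/
def eSet (N : ℕ) (A : Finset ℕ) : Finset ℕ := (A.filter (fun b => b + 1 ∉ A)).erase N

/-- `ē(A) = e(A) ∪ e(A∁)`. -/
def ebar (N : ℕ) (A : Finset ℕ) : Finset ℕ := eSet N A ∪ eSet N (coSet N A)

/-- `T_S`: the image of `T ⊆ [|S|]` under the increasing enumeration of `S` (1-based). -/
def embedIn (S T : Finset ℕ) : Finset ℕ :=
  T.image (fun t => (S.sort (· ≤ ·)).getD (t - 1) 0)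

/-- `std_S(T)`: ranks within `S` of the elements of `T ⊆ S`. -/
def stdSet (S T : Finset ℕ) : Finset ℕ :=
  T.image (fun t => (S.filter (· ≤ t)).card)

/-- `I #_A J := I_{A∁} ⊔ J_A`. -/
def hashAJ (N : ℕ) (A I J : Finset ℕ) : Finset ℕ :=
  embedIn (coSet N A) I ∪ embedIn A J

/-- `I ⧢_A J := e(A) ⊔ ((I #_A J) ∖ ē(A))`. -/
def shSet (N : ℕ) (A I J : Finset ℕ) : Finset ℕ :=
  eSet N A ∪ (hashAJ N A I J \ ebar N A)

/-- The `i`-th entry (1-based) of the word `w`. -/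
def wordEntry (w : List ℕ) (i : ℕ) : ℕ := w.getD (i - 1) 0

/-- The descent set of the word `w`. -/
def wordDes (w : List ℕ) : Finset ℕ :=
  (Finset.Icc 1 (w.length - 1)).filter (fun i => wordEntry w (i + 1) < wordEntry w i)

/-- `u ⧢_A v`: the word of length `N` whose subword in positions `A` is `v`
and whose subword in the complementary positions is `u`. -/
def shWord (N : ℕ) (u v : List ℕ) (A : Finset ℕ) : List ℕ :=
  (List.range N).map (fun p0 =>
    if p0 + 1 ∈ A then v.getD ((A.filter (· ≤ p0 + 1)).card - 1) 0
    else u.getD (((coSet N A).filter (· ≤ p0 + 1)).card - 1) 0)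

/-- `v[m]`: the `m`-shifted word. -/
def shiftWord (m : ℕ) (v : List ℕ) : List ℕ := v.map (· + m)

/-- `u` is (the word of) a permutation in `S_m`. -/
def IsPermWord (m : ℕ) (u : List ℕ) : Prop := u.Perm (List.range' 1 m)

/-- `z_A`. -/
def zA (N : ℕ) (A : Finset ℕ) : ℕ :=
  if N ∈ A then WithBot.unbotD 0 (coSet N A).max else WithBot.unbotD 0 A.max

/-- `J̃_A`. -/
def Jtilde (N : ℕ) (A J : Finset ℕ) : Finset ℕ :=
  if N ∈ A then insert N (embedIn A J) else insert (zA N A) (embedIn A J)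

/-- `𝒜_{α,β}` (as a set of subsets of `[m+n]`, where `I = set α`, `J = set β`). -/
def calA (m n : ℕ) (I J : Finset ℕ) : Finset (Finset ℕ) :=
  ((Finset.Icc 1 (m + n)).powersetCard n).filter
    (fun A => ebar (m + n) A \ {zA (m + n) A} ⊆ hashAJ (m + n) A I J)

/-- `Ψ(A) = std_{(I #_A J) ⊔ {z_A} ⊔ {m+n}}(J̃_A)`. -/
def Psi (m n : ℕ) (I J : Finset ℕ) (A : Finset ℕ) : Finset ℕ :=
  stdSet (insert (m + n) (insert (zA (m + n) A) (hashAJ (m + n) A I J)))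
    (Jtilde (m + n) A J)

/-- `α ⧢_D β`: the shuffle of the compositions `α` and `β` whose `β`-entries occupy `D`. -/
def shComp (α β : List ℕ) (D : Finset ℕ) : List ℕ :=
  shWord (α.length + β.length) α β D

/-- `Σ(α,β,D,i)`: the sum of the first `d_i − 1` entries of `α ⧢_D β`. -/
def psum (α β : List ℕ) (D : Finset ℕ) (i : ℕ) : ℕ :=
  ((shComp α β D).take ((D.sort (· ≤ ·)).getD (i - 1) 0 - 1)).sum

/-- `Φ(D)`. -/
def Phi (α β : List ℕ) (D : Finset ℕ) : Finset ℕ :=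
  (Finset.Icc 1 β.length).biUnion (fun i =>
    Finset.Icc (psum α β D i + 1) (psum α β D i + β.getD (i - 1) 0))

/-- The index set for two-way overlapping shuffles of `α` and `β`: triples `(D, S₁, S₂)`
where `D` records the shuffle, `S₁` the positions of `+₁` (an `α`-entry immediately
followed by a `β`-entry) and `S₂` the positions of `+₂`. -/
def twoWayIdx (α β : List ℕ) : Finset (Finset ℕ × Finset ℕ × Finset ℕ) :=
  (((Finset.Icc 1 (α.length + β.length)).powersetCard β.length) ×ˢ
    ((Finset.Icc 1 (α.length + β.length - 1)).powerset ×ˢ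
      (Finset.Icc 1 (α.length + β.length - 1)).powerset)).filter
    (fun x => (∀ p ∈ x.2.1, p ∉ x.1 ∧ p + 1 ∈ x.1) ∧ (∀ p ∈ x.2.2, p ∈ x.1 ∧ p + 1 ∉ x.1))

/-- `γ⁺`: the composition obtained from the two-way overlapping shuffle `(D,S₁,S₂)`
by carrying out the marked additions. -/
def plusComp (α β : List ℕ) (D S₁ S₂ : Finset ℕ) : List ℕ :=
  compOf (α.sum + β.sum)
    (((Finset.Icc 1 (α.length + β.length - 1)) \ (S₁ ∪ S₂)).image
      (fun p => ((shComp α β D).take p).sum))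

/-- `D_α(q,t)`. -/
def Dqt (σ : Type) [LinearOrder σ] (F : Type) [Field F] (P : σ → Prop) (q t : F)
    (α : List ℕ) : MvPowerSeries σ F :=
  if α = [] then 1
  else ∑ T ∈ (setComp α).powerset,
    (q ^ ((T.card + 1 : ℤ) - (α.sum : ℤ)) * (-t) ^ (α.length - (T.card + 1))) •
      Mqs σ F P (compOf α.sum T)

/-- Enriched monomial quasisymmetric function with generic weight `c`
(`c = 2` gives `η_α`, `c = q+1` gives `η_α^{(q)}`). -/
def etaQ (σ : Type) [LinearOrder σ] (F : Type) [CommRing F] (P : σ → Prop) (c : F)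
    (α : List ℕ) : MvPowerSeries σ F :=
  if α = [] then 1
  else ∑ T ∈ (setComp α).powerset, (c ^ (T.card + 1)) • Mqs σ F P (compOf α.sum T)

/-- `K_{comp(J)}(ν)` (for `J ⊆ [n−1]`, `n ≥ 1`). -/
def Kset (σ : Type) [LinearOrder σ] (P : σ → Prop) (ν : ℤ) (n : ℕ) (J : Finset ℕ) :
    MvPowerSeries σ ℂ :=
  ((ν : ℂ) ^ (-((n : ℤ) - 1))) •
    ∑ I ∈ (Finset.Icc 1 (n - 1)).powerset,
      ((-1 : ℂ) ^ ((J \ I).card) *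
        ((ν : ℂ) - 1) ^ ((Finset.Icc 1 (n - 1) \ (I ∪ J)).card)) • Lqs σ ℂ P n I

/-- `K_α(ν)` for a composition `α`. -/
def Kcomp (σ : Type) [LinearOrder σ] (P : σ → Prop) (ν : ℤ) (α : List ℕ) :
    MvPowerSeries σ ℂ :=
  if α = [] then 1 else Kset σ P ν α.sum (setComp α)

/-- The quasisymmetric Hall–Littlewood function `G_I(q)` (for `I ⊆ [n−1]`),
with `q = RatFunc.X`. -/
def Gq (σ : Type) [LinearOrder σ] (P : σ → Prop) (n : ℕ) (I : Finset ℕ) :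
    MvPowerSeries σ (RatFunc ℂ) :=
  ∑ J ∈ (Finset.Icc 1 (n - 1)).powerset.filter (fun J => I ⊆ J),
    ((-1 : RatFunc ℂ) ^ ((J \ I).card) * RatFunc.X ^ (∑ i ∈ J \ I, wt I i)) •
      Lqs σ (RatFunc ℂ) P n J

/-- `G_γ(q)` for a composition `γ`. -/
def Gcomp (σ : Type) [LinearOrder σ] (P : σ → Prop) (γ : List ℕ) :
    MvPowerSeries σ (RatFunc ℂ) :=
  if γ = [] then 1 else Gq σ P γ.sum (setComp γ)

/-- The `q`-monomial quasisymmetric function `M_{comp(I)}(q)` (for `I ⊆ [n−1]`). -/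
def MqF (σ : Type) [LinearOrder σ] (P : σ → Prop) (n : ℕ) (I : Finset ℕ) :
    MvPowerSeries σ (RatFunc ℂ) :=
  ∑ T ∈ (Finset.Icc 1 (n - 1)).powerset.filter (fun T => I ⊆ T),
    ((-RatFunc.X : RatFunc ℂ) ^ (T.card - I.card)) • Lqs σ (RatFunc ℂ) P n T

/-- `M_γ(q)` for a composition `γ`. -/
def Mqcomp (σ : Type) [LinearOrder σ] (P : σ → Prop) (γ : List ℕ) :
    MvPowerSeries σ (RatFunc ℂ) :=
  if γ = [] then 1 else MqF σ P γ.sum (setComp γ)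

/-- `P_w`: positions of the nonzero entries of `w`. -/
def Pset (w : List ℕ) : Finset ℕ :=
  (Finset.Icc 1 w.length).filter (fun i => wordEntry w i ≠ 0)

/-- Standardized descent set `sDes(w)`. -/
def sDes (w : List ℕ) : Finset ℕ := (stdSet (Pset w) (wordDes w)).erase (Pset w).card

def wLe (m : ℕ) (w : List ℕ) : List ℕ := w.filter (fun a => decide (a ≤ m))
def wGt (m : ℕ) (w : List ℕ) : List ℕ := (w.filter (fun a => decide (m < a))).map (· - m)
def wLe0 (m : ℕ) (w : List ℕ) : List ℕ := w.map (fun a => if a ≤ m then a else 0)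
def wGt0 (m : ℕ) (w : List ℕ) : List ℕ := w.map (fun a => if a ≤ m then 0 else a)

/-- 1-based position of `a` in the list `l`. -/
def posIn (l : List ℕ) (a : ℕ) : ℕ := l.idxOf a + 1

/-- The standardized `q`-weight `sw^w_m`. -/
def swq (m : ℕ) (w : List ℕ) (i : ℕ) : RatFunc ℂ :=
  if wordEntry w i ≤ m ∧ wordEntry w (i + 1) ≤ m then
    RatFunc.X ^ wt (wordDes (wLe m w)) (posIn (wLe m w) (wordEntry w i))
  else if m < wordEntry w i ∧ m < wordEntry w (i + 1) then
    RatFunc.X ^ wt (wordDes (wGt m w)) (posIn (wGt m w) (wordEntry w i - m))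
  else 0

/-- `c_q(u,v) = (1−q^u)(1−q^{u−1})⋯(1−q^{u−v+1})`. -/
def cq (u v : ℕ) : RatFunc ℂ := ∏ j ∈ Finset.range v, (1 - RatFunc.X ^ (u - j))

/-- The `t`-th smallest element of `I` (1-based). -/
def nthElt (I : Finset ℕ) (t : ℕ) : ℕ := (I.sort (· ≤ ·)).getD (t - 1) 0

/-- `Bre(I,J)_t`. -/
def bre (I J : Finset ℕ) (t : ℕ) : ℕ :=
  if t = 0 then 0 else (J.filter (· ≤ nthElt I t)).card

/-- `s(I,J)`. -/
def sIJ (I J : Finset ℕ) : ℕ :=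
  ∑ t ∈ Finset.Icc 1 I.card, t * (bre I J t - bre I J (t - 1) - 1)

/-- `Bre(I,J)` as a set. -/
def breSet (I J : Finset ℕ) : Finset ℕ := (Finset.Icc 1 I.card).image (bre I J)

/-- `g(I,J)`. -/
def gIJ (I J : Finset ℕ) : ℕ := ∑ k ∈ Finset.Icc 1 J.card \ breSet I J, k

/-- Near-concatenation `α ⊙ β`. -/
def nearConcat : List ℕ → List ℕ → List ℕ
  | [], β => β
  | α, [] => α
  | α, b :: βs => α.dropLast ++ (α.getLast?.getD 0 + b) :: βs

/-- The field `ℂ(q,t)`. -/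
abbrev Fqt : Type := FractionRing (MvPolynomial (Fin 2) ℂ)

/-- The variable `q` of `ℂ(q,t)`. -/
def qv : Fqt := algebraMap (MvPolynomial (Fin 2) ℂ) Fqt (MvPolynomial.X 0)

/-- The variable `t` of `ℂ(q,t)`. -/
def tv : Fqt := algebraMap (MvPolynomial (Fin 2) ℂ) Fqt (MvPolynomial.X 1)

/-- The combined two-alphabet variable set, every `x`-variable smaller
than every `y`-variable. -/
abbrev Sig2 : Type := ℕ ⊕ₗ ℕ

/-- The full alphabet. -/
def PTot : Sig2 → Prop := fun _ => True

/-- The first (`x`) alphabet. -/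
def PLft : Sig2 → Prop := fun s => (ofLex s).isLeft = true

/-- The second (`y`) alphabet. -/
def PRgt : Sig2 → Prop := fun s => (ofLex s).isRight = true

/-! Expanding each `L_I` in the monomial basis, the coefficient of `M_T` in `K_α(ν)` is a sum over
`I ⊆ T` of products of per-element weights `aᵢ` over `[n−1] ∖ I`, with `aᵢ = −1` on `set(α)` and
`aᵢ = ν − 1` off it. This sum factorises as `∏_{[n−1]∖T} aᵢ · ∏_{T} (1 + aᵢ)`, and `1 + aᵢ` vanishes
on `set(α)`, so only the `T ⊆ set(α)∁` survive; their coefficients are those of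
`D_{α∁}(−ν, ν−1)`. -/

lemma add_sum_take_zipWith_sub {b : ℕ} {l : List ℕ} (hl : (b :: l).IsChain (· ≤ ·))
    {k : ℕ} (hk : k ≤ l.length) :
    b + ((l.zipWith (· - ·) (b :: l)).take k).sum = (b :: l).getD k 0 := by
  induction l generalizing b k with
  | nil => simp_all
  | cons a l ih =>
    rw [List.isChain_cons_cons] at hl
    cases k with
    | zero => simp
    | succ k =>
      have := ih hl.2 (Nat.le_of_succ_le_succ hk)
      simp only [List.zipWith_cons_cons, List.take_succ_cons, List.sum_cons,
        List.getD_cons_succ] at this ⊢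
      omega

lemma image_range_getD_eq_toFinset {α : Type*} [DecidableEq α] (l : List α) (d : α) :
    (Finset.range l.length).image (l.getD · d) = l.toFinset := by
  ext x
  simp only [Finset.mem_image, Finset.mem_range, List.mem_toFinset, List.mem_iff_getElem]
  constructor
  · rintro ⟨j, hj, rfl⟩
    exact ⟨j, hj, (List.getD_eq_getElem _ _ hj).symm⟩
  · rintro ⟨j, hj, rfl⟩
    exact ⟨j, hj, List.getD_eq_getElem _ _ hj⟩

section compOf

variable {n : ℕ} {S : Finset ℕ}

lemma compOf_of_ne_zero (hn : n ≠ 0) :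
    compOf n S = (S.sort (· ≤ ·) ++ [n]).zipWith (· - ·) (0 :: (S.sort (· ≤ ·) ++ [n])) :=
  if_neg hn

lemma compOf_length (hn : n ≠ 0) : (compOf n S).length = S.card + 1 := by
  simp [compOf_of_ne_zero hn, Finset.length_sort]

lemma compOf_ne_nil (hn : n ≠ 0) : compOf n S ≠ [] :=
  List.ne_nil_of_length_pos (by rw [compOf_length hn]; omega)

lemma sum_take_compOf (hn : n ≠ 0) (hS : ∀ s ∈ S, s ≤ n) {k : ℕ} (hk : k ≤ S.card + 1) :
    ((compOf n S).take k).sum = (0 :: (S.sort (· ≤ ·) ++ [n])).getD k 0 := by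
  have hsorted : (0 :: (S.sort (· ≤ ·) ++ [n])).IsChain (· ≤ ·) := by
    rw [List.isChain_iff_pairwise, List.pairwise_cons, List.pairwise_append]
    refine ⟨fun _ _ => Nat.zero_le _, Finset.pairwise_sort _ _, List.pairwise_singleton _ _, ?_⟩
    simp only [Finset.mem_sort, List.mem_singleton]
    rintro s hs _ rfl
    exact hS s hs
  rw [compOf_of_ne_zero hn, ← add_sum_take_zipWith_sub hsorted (by simpa using hk), zero_add]

lemma compOf_sum (hn : n ≠ 0) (hS : ∀ s ∈ S, s ≤ n) : (compOf n S).sum = n := by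
  have h := sum_take_compOf hn hS (le_refl (S.card + 1))
  rw [← compOf_length hn, List.take_length, compOf_length hn, List.getD_cons_succ,
    List.getD_append_right _ _ _ _ (by simp)] at h
  simpa using h

lemma setComp_compOf (hn : n ≠ 0) (hS : ∀ s ∈ S, s ≤ n) : setComp (compOf n S) = S := by
  have hget : ∀ j ∈ Finset.range S.card,
      ((compOf n S).take (j + 1)).sum = (S.sort (· ≤ ·)).getD j 0 := by
    intro j hj
    rw [Finset.mem_range] at hj
    rw [sum_take_compOf hn hS (by omega), List.getD_cons_succ,
      List.getD_append _ _ _ _ (by simpa using hj)]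
  rw [setComp, compOf_length hn, Nat.add_sub_cancel, Finset.image_congr hget]
  simpa using image_range_getD_eq_toFinset (S.sort (· ≤ ·)) 0

end compOf

lemma setComp_subset_Icc {α : List ℕ} (hα : IsComp α) :
    setComp α ⊆ Finset.Icc 1 (α.sum - 1) := by
  intro x hx
  obtain ⟨j, hj, rfl⟩ := Finset.mem_image.mp hx
  rw [Finset.mem_range] at hj
  have hpos : ∀ l : List ℕ, (∀ a ∈ l, a ∈ α) → l ≠ [] → 0 < l.sum :=
    fun l hl hne => List.sum_pos _ (fun a ha => hα a (hl a ha)) hne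
  have htake := hpos (α.take (j + 1)) (fun _ => List.mem_of_mem_take)
    (List.ne_nil_of_length_pos (by rw [List.length_take]; omega))
  have hdrop := hpos (α.drop (j + 1)) (fun _ => List.mem_of_mem_drop)
    (List.ne_nil_of_length_pos (by rw [List.length_drop]; omega))
  have hsplit := congrArg List.sum (List.take_append_drop (j + 1) α)
  rw [List.sum_append] at hsplit
  rw [Finset.mem_Icc]
  omega

lemma prod_sdiff_ite_mem {ι M : Type*} [DecidableEq ι] [CommMonoid M] (x y : M)
    {N I J : Finset ι} (hJ : J ⊆ N) :
    ∏ i ∈ N \ I, (if i ∈ J then x else y) = x ^ (J \ I).card * y ^ (N \ (I ∪ J)).card := by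
  rw [Finset.prod_ite, Finset.prod_const, Finset.prod_const]
  congr 3 <;> ext i <;> simp only [Finset.mem_filter, Finset.mem_sdiff, Finset.mem_union] <;>
    have := @hJ i <;> tauto

lemma sum_powerset_prod_sdiff {ι R : Type*} [DecidableEq ι] [CommSemiring R] (a : ι → R)
    {N T : Finset ι} (hT : T ⊆ N) :
    ∑ I ∈ T.powerset, ∏ i ∈ N \ I, a i = (∏ i ∈ N \ T, a i) * ∏ i ∈ T, (1 + a i) := by
  rw [Finset.prod_add, Finset.mul_sum]
  refine Finset.sum_congr rfl fun I hI => ?_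
  have hIT := Finset.mem_powerset.mp hI
  rw [Finset.prod_const_one, one_mul, ← Finset.sdiff_union_sdiff_cancel hT hIT,
    Finset.prod_union (Finset.sdiff_disjoint.mono_right Finset.sdiff_subset)]

lemma neg_zpow_mul_neg_sub_one_pow {K : Type*} [Field K] {ν : K} (hν : ν ≠ 0) {n j k m : ℕ}
    (hn : n = j + (k + m) + 1) :
    (-ν) ^ ((k + 1 : ℤ) - n) * (-(ν - 1)) ^ m =
      ν ^ (-((n : ℤ) - 1)) * ((-1) ^ j * (ν - 1) ^ m * ν ^ k) := by
  subst hn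
  have h1 : ((k : ℤ) + 1) - ((j + (k + m) + 1 : ℕ) : ℤ) = -((j + m : ℕ) : ℤ) := by push_cast; ring
  have h2 : -(((j + (k + m) + 1 : ℕ) : ℤ) - 1) = -((j + m + k : ℕ) : ℤ) := by push_cast; ring
  have hsign : ((-1 : K) ^ m) ^ 2 = 1 := by rw [← pow_mul, mul_comm, pow_mul]; simp
  rw [h1, h2, zpow_neg, zpow_neg, zpow_natCast, zpow_natCast, neg_pow, neg_pow (ν - 1), mul_inv,
    ← inv_pow, inv_neg_one, pow_add ν (j + m) k]
  field_simp
  linear_combination (ν - 1) ^ m * (-1) ^ j * hsign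

section expansion

variable {σ : Type} [LinearOrder σ] (P : σ → Prop)

lemma sum_smul_Lqs {F : Type} [CommRing F] (n : ℕ) (c : Finset ℕ → F) :
    ∑ I ∈ (Finset.Icc 1 (n - 1)).powerset, c I • Lqs σ F P n I =
      ∑ T ∈ (Finset.Icc 1 (n - 1)).powerset,
        (∑ I ∈ T.powerset, c I) • Mqs σ F P (compOf n T) := by
  simp only [Lqs, Finset.smul_sum, Finset.sum_smul]
  refine Finset.sum_comm' fun I T => ?_
  simp only [Finset.mem_filter, Finset.mem_powerset]
  exact ⟨fun ⟨_, hT, hIT⟩ => ⟨hIT, hT⟩, fun ⟨hIT, hT⟩ => ⟨hIT.trans hT, hT, hIT⟩⟩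

lemma Dqt_compOf {F : Type} [Field F] (q t : F) {n : ℕ} (hn : n ≠ 0) {S : Finset ℕ}
    (hS : ∀ s ∈ S, s ≤ n) :
    Dqt σ F P q t (compOf n S) =
      ∑ T ∈ S.powerset, (q ^ ((T.card + 1 : ℤ) - n) * (-t) ^ (S.card - T.card)) •
        Mqs σ F P (compOf n T) := by
  rw [Dqt, if_neg (compOf_ne_nil hn), setComp_compOf hn hS, compOf_sum hn hS,
    compOf_length hn]
  simp only [Nat.add_sub_add_right]

lemma Kset_eq_sum_Mqs (ν : ℤ) (n : ℕ) {J : Finset ℕ} (hJ : J ⊆ Finset.Icc 1 (n - 1)) :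
    Kset σ P ν n J =
      ∑ T ∈ (Finset.Icc 1 (n - 1) \ J).powerset,
        ((ν : ℂ) ^ (-((n : ℤ) - 1)) *
          ((-1) ^ J.card * ((ν : ℂ) - 1) ^ ((Finset.Icc 1 (n - 1) \ J) \ T).card *
            (ν : ℂ) ^ T.card)) • Mqs σ ℂ P (compOf n T) := by
  rw [Kset]
  set N := Finset.Icc 1 (n - 1)
  set a : ℕ → ℂ := fun i => if i ∈ J then -1 else (ν : ℂ) - 1
  have hweight : ∀ I,
      (-1) ^ (J \ I).card * ((ν : ℂ) - 1) ^ (N \ (I ∪ J)).card = ∏ i ∈ N \ I, a i :=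
    fun _ => (prod_sdiff_ite_mem _ _ hJ).symm
  have hfactor : ∀ i, 1 + a i = if i ∈ J then 0 else (ν : ℂ) := by
    intro i
    simp only [a]
    split_ifs <;> ring
  simp_rw [hweight]
  rw [sum_smul_Lqs, Finset.smul_sum,
    ← Finset.sum_subset (Finset.powerset_mono.mpr Finset.sdiff_subset)]
  · refine Finset.sum_congr rfl fun T hT => ?_
    have hTJ := Finset.mem_powerset.mp hT
    have hdisj : Disjoint J T := Finset.disjoint_sdiff.mono_right hTJ
    rw [smul_smul, sum_powerset_prod_sdiff a (hTJ.trans Finset.sdiff_subset), ← hweight,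
      Finset.prod_congr rfl fun i hi =>
        (hfactor i).trans (if_neg (Finset.disjoint_right.mp hdisj hi)),
      Finset.prod_const, Finset.sdiff_eq_self_of_disjoint hdisj, sdiff_sdiff_left,
      Finset.sup_eq_union, Finset.union_comm]
  · intro T hT hTJ
    obtain ⟨i, hiT, hiJ⟩ := Finset.not_subset.mp (mt Finset.mem_powerset.mpr hTJ)
    have hi : i ∈ J := by
      by_contra h
      exact hiJ (Finset.mem_sdiff.mpr ⟨Finset.mem_powerset.mp hT hiT, h⟩)
    rw [sum_powerset_prod_sdiff a (Finset.mem_powerset.mp hT),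
      Finset.prod_eq_zero hiT ((hfactor i).trans (if_pos hi)), mul_zero, zero_smul, smul_zero]

end expansion

/-- `D_{α∁}(−ν, ν−1) = K_α(ν)`. -/
theorem statement9 (ν : ℤ) (hν : 1 < ν) (α : List ℕ) (hα : IsComp α)
    (hn : 1 ≤ α.sum) :
    Dqt ℕ ℂ (fun _ => True) (-(ν : ℂ)) ((ν : ℂ) - 1)
        (compOf α.sum (Finset.Icc 1 (α.sum - 1) \ setComp α)) =
      Kset ℕ (fun _ => True) ν α.sum (setComp α) := by
  have hn0 : α.sum ≠ 0 := by omega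
  have hν0 : (ν : ℂ) ≠ 0 := Int.cast_ne_zero.mpr (by omega)
  have hJ := setComp_subset_Icc hα
  have hS : ∀ s ∈ Finset.Icc 1 (α.sum - 1) \ setComp α, s ≤ α.sum := fun s hs => by
    simp only [Finset.mem_sdiff, Finset.mem_Icc] at hs
    omega
  have hcard : (Finset.Icc 1 (α.sum - 1) \ setComp α).card + (setComp α).card + 1 = α.sum := by
    have := Finset.card_le_card hJ
    rw [Finset.card_sdiff_of_subset hJ]
    simp only [Nat.card_Icc] at this ⊢
    omega
  rw [Dqt_compOf _ _ _ hn0 hS, Kset_eq_sum_Mqs _ _ _ hJ]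
  refine Finset.sum_congr rfl fun T hT => ?_
  have hTS := Finset.card_le_card (Finset.mem_powerset.mp hT)
  rw [Finset.card_sdiff_of_subset (Finset.mem_powerset.mp hT)]
  exact congrArg (· • _) (neg_zpow_mul_neg_sub_one_pow hν0 (by omega))

end
end QSymPaper
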